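/- The monomial w_1 w_2 ··· w_r appears with nonzero contribution in the sum Σ_{m=1}^{r} ((-1)^m/(24m)) Σ_{partitions} ∏_{s=1}^m (1+Σ_{j∈I_(s)}w_j)^{|I_(s)|-2} only from the term with m = r (all blocks singletons), and in that term the number of ordered set partitions of [r] into r singleton blocks is r!, so the coefficient of w_1···w_r coming from m=r is ((-1)^r/(24r)) · r! · (-1)^r = (r-1)!/24. -/

import Mathlib

open Classical

/-- An ordered set partition of `Fin r` into `m` pairwise disjoint nonempty blocks. -/
def IsOSP {r m : ℕ} (I : Fin m → Finset (Fin r)) : Prop :=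
  (∀ s, (I s).Nonempty) ∧ (∀ s t, s ≠ t → Disjoint (I s) (I t)) ∧
    Finset.univ.biUnion I = (Finset.univ : Finset (Fin r))

/-- The factor `(1 + Σ_{j∈S} w_j)^{|S|-2}` as a multivariate power series in the `w_j`
over `ℚ`, written `(1+c)^{|S|} · ((1+c)⁻¹)^2` via `Ring.inverse` (the base has constant
term `1`, hence is a unit; for singleton blocks this is the geometric series). -/
noncomputable def blockFactor {r : ℕ} (S : Finset (Fin r)) :
    MvPowerSeries (Fin r) ℚ :=
  (1 + ∑ j ∈ S, MvPowerSeries.X j) ^ S.card *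
    (Ring.inverse (1 + ∑ j ∈ S, MvPowerSeries.X j)) ^ 2

/-- `H_r = Σ_{m=1}^r ((-1)^m/(24m)) Σ_{ordered set partitions} Π_s (1+Σ_{j∈I_s}w_j)^{|I_s|-2}`
as a formal power series in `w_1,…,w_r`. -/
noncomputable def Hps (r : ℕ) : MvPowerSeries (Fin r) ℚ :=
  ∑ m ∈ Finset.Icc 1 r, ((-1 : ℚ) ^ m / (24 * m)) •
    ∑ I ∈ Finset.univ.filter (fun I : Fin m → Finset (Fin r) => IsOSP I),
      ∏ s, blockFactor (I s)


section Aux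
variable {r : ℕ}

variable {r : ℕ}

noncomputable def G (j : Fin r) : MvPowerSeries (Fin r) ℚ :=
  fun d => if d.support ⊆ {j} then (-1 : ℚ) ^ (d j) else 0

lemma coeff_G (j : Fin r) (d : Fin r →₀ ℕ) :
    MvPowerSeries.coeff d (G j) = if d.support ⊆ {j} then (-1 : ℚ) ^ (d j) else 0 := rfl

lemma constCoeff_base (S : Finset (Fin r)) :
    MvPowerSeries.constantCoeff (1 + ∑ j ∈ S, MvPowerSeries.X j : MvPowerSeries (Fin r) ℚ) = 1 := by
  simp

lemma isUnit_base (S : Finset (Fin r)) :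
    IsUnit (1 + ∑ j ∈ S, MvPowerSeries.X j : MvPowerSeries (Fin r) ℚ) := by
  rw [MvPowerSeries.isUnit_iff_constantCoeff, constCoeff_base]
  exact isUnit_one

lemma one_add_X_mul_G (j : Fin r) : (1 + MvPowerSeries.X j) * G j = 1 := by
  ext d
  rw [add_mul, one_mul, map_add,
    show (MvPowerSeries.X j : MvPowerSeries (Fin r) ℚ)
      = MvPowerSeries.monomial (Finsupp.single j 1) 1 from rfl,
    MvPowerSeries.coeff_monomial_mul, coeff_G, MvPowerSeries.coeff_one]
  by_cases h : d.support ⊆ {j}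
  · rcases Nat.eq_zero_or_pos (d j) with h0 | h0
    · have hd : d = 0 := by
        ext i
        by_cases hi : i = j
        · rw [hi]; exact h0
        · by_contra hne
          have : i ∈ d.support := Finsupp.mem_support_iff.mpr hne
          exact hi (Finset.mem_singleton.mp (h this))
      subst hd
      have hle : ¬ Finsupp.single j 1 ≤ (0 : Fin r →₀ ℕ) := by
        intro hle
        simpa using hle j
      simp [hle, h0]
    · have hle : Finsupp.single j 1 ≤ d := by
        intro i
        rcases eq_or_ne i j with rfl | hi
        · show (Finsupp.single i 1 : Fin r →₀ ℕ) i ≤ d i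
          rw [Finsupp.single_eq_same]; exact h0
        · simp [Finsupp.single_apply, hi.symm]
      have hsub : (d - Finsupp.single j 1).support ⊆ {j} := by
        intro i hi
        apply h
        rw [Finsupp.mem_support_iff] at hi ⊢
        intro hz
        apply hi
        rw [Finsupp.tsub_apply, hz]
        simp
      have hdne : d ≠ 0 := by
        intro hz; rw [hz] at h0; simp at h0
      rw [if_pos hle, if_pos h, coeff_G, if_pos hsub, if_neg hdne]
      have hval : (d - Finsupp.single j 1 : Fin r →₀ ℕ) j = d j - 1 := by
        rw [Finsupp.tsub_apply, Finsupp.single_apply, if_pos rfl]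
      rw [hval]
      obtain ⟨n, hn⟩ : ∃ n, d j = n + 1 := ⟨d j - 1, by omega⟩
      rw [hn]
      simp [pow_succ]
  · obtain ⟨i, hi, hij⟩ : ∃ i, i ∈ d.support ∧ i ≠ j := by
      by_contra hc
      push_neg at hc
      exact h fun i hi => Finset.mem_singleton.mpr (hc i hi)
    have hdne : d ≠ 0 := by
      intro hz; rw [hz] at hi; simp at hi
    rw [if_neg h, if_neg hdne]
    by_cases hle : Finsupp.single j 1 ≤ d
    · have hsub : ¬ (d - Finsupp.single j 1).support ⊆ {j} := by
        intro hc
        have : i ∈ (d - Finsupp.single j 1).support := by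
          rw [Finsupp.mem_support_iff, Finsupp.tsub_apply, Finsupp.single_apply,
            if_neg (Ne.symm hij)]
          simpa using Finsupp.mem_support_iff.mp hi
        exact hij (Finset.mem_singleton.mp (hc this))
      rw [if_pos hle, coeff_G, if_neg hsub]
      simp
    · rw [if_neg hle]
      simp

lemma inverse_one_add_X (j : Fin r) :
    Ring.inverse (1 + MvPowerSeries.X j : MvPowerSeries (Fin r) ℚ) = G j := by
  have hu : IsUnit (1 + MvPowerSeries.X j : MvPowerSeries (Fin r) ℚ) := by
    have := isUnit_base ({j} : Finset (Fin r))
    simpa using this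
  calc Ring.inverse (1 + MvPowerSeries.X j : MvPowerSeries (Fin r) ℚ)
      = Ring.inverse (1 + MvPowerSeries.X j) * ((1 + MvPowerSeries.X j) * G j) := by
        rw [one_add_X_mul_G, mul_one]
    _ = G j := by rw [← mul_assoc, Ring.inverse_mul_cancel _ hu, one_mul]


lemma blockFactor_singleton (j : Fin r) : blockFactor {j} = G j := by
  rw [blockFactor]
  simp only [Finset.sum_singleton, Finset.card_singleton, pow_one, inverse_one_add_X]
  rw [sq, ← mul_assoc, one_add_X_mul_G, one_mul]

lemma blockFactor_of_two_le {S : Finset (Fin r)} (h2 : 2 ≤ S.card) :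
    blockFactor S = (1 + ∑ j ∈ S, MvPowerSeries.X j) ^ (S.card - 2) := by
  rw [blockFactor]
  have : (1 + ∑ j ∈ S, MvPowerSeries.X j : MvPowerSeries (Fin r) ℚ) ^ S.card
      = (1 + ∑ j ∈ S, MvPowerSeries.X j) ^ (S.card - 2)
        * (1 + ∑ j ∈ S, MvPowerSeries.X j) ^ 2 := by
    rw [← pow_add]; congr 1; omega
  rw [this, mul_assoc, ← mul_pow, Ring.mul_inverse_cancel _ (isUnit_base S), one_pow, mul_one]

lemma coeff_base_ne {S : Finset (Fin r)} {e : Fin r →₀ ℕ}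
    (h : MvPowerSeries.coeff e (1 + ∑ j ∈ S, MvPowerSeries.X j : MvPowerSeries (Fin r) ℚ) ≠ 0) :
    e = 0 ∨ ∃ j ∈ S, e = Finsupp.single j 1 := by
  by_contra hc
  push_neg at hc
  obtain ⟨h0, hj⟩ := hc
  apply h
  rw [map_add, map_sum, MvPowerSeries.coeff_one, if_neg h0, zero_add]
  refine Finset.sum_eq_zero fun j hjS => ?_
  rw [MvPowerSeries.coeff_X, if_neg (hj j hjS)]

lemma coeff_pow_base {S : Finset (Fin r)} {n : ℕ} {d : Fin r →₀ ℕ}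
    (h : MvPowerSeries.coeff d ((1 + ∑ j ∈ S, MvPowerSeries.X j : MvPowerSeries (Fin r) ℚ) ^ n) ≠ 0) :
    (∀ i, i ∉ S → d i = 0) ∧ (∑ i, d i) ≤ n := by
  induction n generalizing d with
  | zero =>
    rw [pow_zero, MvPowerSeries.coeff_one] at h
    have : d = 0 := by by_contra hc; rw [if_neg hc] at h; exact h rfl
    subst this
    simp
  | succ n ih =>
    rw [pow_succ, MvPowerSeries.coeff_mul] at h
    obtain ⟨⟨a, b⟩, hp, hne⟩ := Finset.exists_ne_zero_of_sum_ne_zero h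
    rw [Finset.HasAntidiagonal.mem_antidiagonal] at hp
    dsimp only at hne
    obtain ⟨hsupp1, hdeg1⟩ := ih (left_ne_zero_of_mul hne)
    have h2 := coeff_base_ne (right_ne_zero_of_mul hne)
    subst hp
    rcases h2 with rfl | ⟨j, hjS, rfl⟩
    · constructor
      · intro i hi; simpa using hsupp1 i hi
      · simp only [Finsupp.coe_add, Pi.add_apply, Finsupp.coe_zero, Pi.zero_apply, add_zero]
        omega
    · constructor
      · intro i hi
        have : (Finsupp.single j 1 : Fin r →₀ ℕ) i = 0 := by
          rw [Finsupp.single_apply, if_neg]; rintro rfl; exact hi hjS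
        simp [hsupp1 i hi, this]
      · have : ∑ i, (a + Finsupp.single j 1 : Fin r →₀ ℕ) i
            = (∑ i, a i) + ∑ i, (Finsupp.single j 1 : Fin r →₀ ℕ) i := by
          rw [← Finset.sum_add_distrib]; rfl
        rw [this]
        have hs : ∑ i, (Finsupp.single j 1 : Fin r →₀ ℕ) i = 1 := by
          simp [Finsupp.single_apply, Finset.sum_ite_eq]
        omega

lemma support_blockFactor {S : Finset (Fin r)} (hS : S.Nonempty) {d : Fin r →₀ ℕ}
    (h : MvPowerSeries.coeff d (blockFactor S) ≠ 0) : ∀ i, i ∉ S → d i = 0 := by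
  rcases eq_or_lt_of_le (show 1 ≤ S.card from Finset.Nonempty.card_pos hS) with h1 | h2
  · obtain ⟨j, rfl⟩ := Finset.card_eq_one.mp h1.symm
    rw [blockFactor_singleton, coeff_G] at h
    intro i hi
    by_contra hne
    have hsupp : ¬ d.support ⊆ {j} := fun hc => by
      have := hc (Finsupp.mem_support_iff.mpr hne)
      simp only [Finset.mem_singleton] at this
      exact hi (by simpa [this] using Finset.mem_singleton_self j)
    rw [if_neg hsupp] at h
    exact h rfl
  · rw [blockFactor_of_two_le h2] at h
    exact (coeff_pow_base h).1


lemma E_apply (j : Fin r) : (Finsupp.equivFunOnFinite.symm fun _ : Fin r => 1) j = 1 := rfl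

lemma osp_card_sum {m : ℕ} {I : Fin m → Finset (Fin r)} (hI : IsOSP I) :
    ∑ s, (I s).card = r := by
  obtain ⟨hne, hdisj, hcover⟩ := hI
  rw [← Finset.card_biUnion (fun s _ t _ h => hdisj s t h), hcover, Finset.card_univ,
    Fintype.card_fin]

lemma vanish {m : ℕ} {I : Fin m → Finset (Fin r)} (hI : IsOSP I) (hm : m < r) :
    MvPowerSeries.coeff (Finsupp.equivFunOnFinite.symm fun _ : Fin r => 1)
      (∏ s, blockFactor (I s)) = 0 := by
  have hsum := osp_card_sum hI
  obtain ⟨hne, hdisj, hcover⟩ := hI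
  obtain ⟨s0, hs0⟩ : ∃ s0, 2 ≤ (I s0).card := by
    by_contra hc
    push_neg at hc
    have : ∑ s, (I s).card ≤ ∑ _s : Fin m, 1 :=
      Finset.sum_le_sum fun s _ => by have h1 := hc s; omega
    simp only [Finset.sum_const, Finset.card_univ, Fintype.card_fin, smul_eq_mul,
      mul_one] at this
    omega
  rw [MvPowerSeries.coeff_prod]
  refine Finset.sum_eq_zero fun l hl => ?_
  rw [Finset.mem_finsuppAntidiag] at hl
  by_contra hne0
  have hfac : ∀ s, MvPowerSeries.coeff (l s) (blockFactor (I s)) ≠ 0 := by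
    intro s hz
    exact hne0 (Finset.prod_eq_zero (Finset.mem_univ s) hz)
  have hsupp : ∀ s i, i ∉ I s → (l s) i = 0 := fun s => support_blockFactor (hne s) (hfac s)
  have hval : ∀ j ∈ I s0, (l s0) j = 1 := by
    intro j hj
    have hE : (∑ s, l s) j = 1 := by rw [hl.1]; rfl
    rw [Finsupp.finset_sum_apply, Finset.sum_eq_single s0] at hE
    · exact hE
    · intro s _ hs
      exact hsupp s j (Finset.disjoint_left.mp (hdisj s0 s (Ne.symm hs)) hj)
    · intro h; exact absurd (Finset.mem_univ s0) h
  have hdeg : ∑ i, (l s0) i ≤ (I s0).card - 2 :=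
    (coeff_pow_base (by rw [← blockFactor_of_two_le hs0]; exact hfac s0)).2
  have hge : (I s0).card ≤ ∑ i, (l s0) i := by
    calc (I s0).card = ∑ j ∈ I s0, 1 := by simp
    _ = ∑ j ∈ I s0, (l s0) j := Finset.sum_congr rfl fun j hj => (hval j hj).symm
    _ ≤ ∑ i, (l s0) i := Finset.sum_le_sum_of_subset (Finset.subset_univ _)
  omega

lemma osp_full_structure {I : Fin r → Finset (Fin r)} (hI : IsOSP I) :
    ∃ σ : Equiv.Perm (Fin r), I = fun s => {σ s} := by
  have hsum := osp_card_sum hI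
  obtain ⟨hne, hdisj, _⟩ := hI
  have hcard : ∀ s, (I s).card = 1 := by
    by_contra hc
    push_neg at hc
    obtain ⟨s0, hs0⟩ := hc
    have h2 : 1 < (I s0).card := lt_of_le_of_ne (Finset.Nonempty.card_pos (hne s0)) (Ne.symm hs0)
    have : ∑ _s : Fin r, 1 < ∑ s, (I s).card :=
      Finset.sum_lt_sum (fun s _ => Finset.Nonempty.card_pos (hne s))
        ⟨s0, Finset.mem_univ s0, h2⟩
    simp only [Finset.sum_const, Finset.card_univ, Fintype.card_fin, smul_eq_mul,
      mul_one] at this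
    omega
  choose a ha using fun s => Finset.card_eq_one.mp (hcard s)
  have hinj : Function.Injective a := by
    intro s t hst
    by_contra hne'
    have := hdisj s t hne'
    rw [ha s, ha t, hst] at this
    simp at this
  obtain ⟨σ, hσ⟩ : ∃ σ : Equiv.Perm (Fin r), ∀ s, σ s = a s :=
    ⟨Equiv.ofBijective a ((Finite.injective_iff_bijective).mp hinj), fun s => rfl⟩
  exact ⟨σ, funext fun s => by rw [ha s, hσ s]⟩

lemma osp_of_perm (σ : Equiv.Perm (Fin r)) : IsOSP (fun s => ({σ s} : Finset (Fin r))) := by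
  refine ⟨fun s => Finset.singleton_nonempty _, fun s t hst => ?_, ?_⟩
  · simp only [Finset.disjoint_singleton]
    exact fun h => hst (σ.injective h)
  · ext x
    simp only [Finset.mem_biUnion, Finset.mem_univ, Finset.mem_singleton, true_and,
      iff_true]
    exact ⟨σ.symm x, (σ.apply_symm_apply x).symm⟩

lemma osp_filter_eq :
    (Finset.univ.filter (fun I : Fin r → Finset (Fin r) => IsOSP I))
      = Finset.image (fun σ : Equiv.Perm (Fin r) => fun s => ({σ s} : Finset (Fin r)))
          Finset.univ := by
  ext I
  simp only [Finset.mem_filter, Finset.mem_univ, true_and, Finset.mem_image]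
  constructor
  · intro hI
    obtain ⟨σ, hσ⟩ := osp_full_structure hI
    exact ⟨σ, hσ.symm⟩
  · rintro ⟨σ, -, rfl⟩
    exact osp_of_perm σ

lemma osp_card :
    (Finset.univ.filter (fun I : Fin r → Finset (Fin r) => IsOSP I)).card = r.factorial := by
  rw [osp_filter_eq, Finset.card_image_of_injective _ ?_, Finset.card_univ, Fintype.card_perm,
    Fintype.card_fin]
  exact fun σ τ h => Equiv.ext fun s => Finset.singleton_injective (congrFun h s)

lemma coeff_singletons (σ : Equiv.Perm (Fin r)) :
    MvPowerSeries.coeff (Finsupp.equivFunOnFinite.symm fun _ : Fin r => 1)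
      (∏ s, blockFactor ({σ s} : Finset (Fin r))) = (-1 : ℚ) ^ r := by
  set E : Fin r →₀ ℕ := Finsupp.equivFunOnFinite.symm fun _ : Fin r => 1 with hE
  set l0 : Fin r →₀ (Fin r →₀ ℕ) :=
    Finsupp.equivFunOnFinite.symm fun s => Finsupp.single (σ s) 1 with hl0
  have hl0app : ∀ s, l0 s = Finsupp.single (σ s) 1 := fun s => rfl
  have hsingle_sum : ∀ (f : Fin r → Fin r →₀ ℕ) (j : Fin r),
      (∀ s, f s = Finsupp.single (σ s) 1) → (∑ s, f s) j = 1 := by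
    intro f j hf
    rw [Finsupp.finset_sum_apply, Finset.sum_eq_single (σ.symm j)]
    · rw [hf, Finsupp.single_apply, if_pos (σ.apply_symm_apply j)]
    · intro s _ hs
      rw [hf, Finsupp.single_apply, if_neg]
      intro hc
      exact hs (by rw [← hc]; exact (σ.symm_apply_apply s).symm)
    · intro h; exact absurd (Finset.mem_univ _) h
  have hsum0 : ∑ s, l0 s = E := by
    ext j
    rw [hsingle_sum _ j hl0app]
    rfl
  have hmem : l0 ∈ Finset.finsuppAntidiag Finset.univ E :=
    Finset.mem_finsuppAntidiag.mpr ⟨hsum0, Finset.subset_univ _⟩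
  rw [MvPowerSeries.coeff_prod, Finset.sum_eq_single_of_mem l0 hmem]
  · have : ∀ s, MvPowerSeries.coeff (l0 s) (blockFactor ({σ s} : Finset (Fin r)))
        = -1 := by
      intro s
      rw [hl0app, blockFactor_singleton, coeff_G,
        if_pos Finsupp.support_single_subset]
      rw [Finsupp.single_apply, if_pos rfl, pow_one]
    rw [Finset.prod_congr rfl fun s _ => this s, Finset.prod_const, Finset.card_univ,
      Fintype.card_fin]
  · intro b hb hbne
    rw [Finset.mem_finsuppAntidiag] at hb
    by_contra hne0
    have hfac : ∀ s, MvPowerSeries.coeff (b s) (blockFactor ({σ s} : Finset (Fin r))) ≠ 0 := by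
      intro s hz
      exact hne0 (Finset.prod_eq_zero (Finset.mem_univ s) hz)
    have hsupp : ∀ s i, i ≠ σ s → (b s) i = 0 := by
      intro s i hi
      exact support_blockFactor (Finset.singleton_nonempty _) (hfac s) i
        (fun hc => hi (Finset.mem_singleton.mp hc))
    have hbs : ∀ s, b s = Finsupp.single (σ s) 1 := by
      intro s
      ext i
      rcases eq_or_ne i (σ s) with rfl | hi
      · have hEj : (∑ t, b t) (σ s) = 1 := by rw [hb.1]; rfl
        rw [Finsupp.finset_sum_apply, Finset.sum_eq_single s] at hEj
        · rw [hEj, Finsupp.single_apply, if_pos rfl]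
        · intro t _ ht
          exact hsupp t (σ s) fun hc => ht (σ.injective hc.symm)
        · intro h; exact absurd (Finset.mem_univ _) h
      · rw [hsupp s i hi, Finsupp.single_apply, if_neg (fun hc => hi hc.symm)]
    exact hbne (Finsupp.ext fun s => by rw [hbs s, hl0app])


end Aux

theorem statement4 (r : ℕ) (hr : 1 ≤ r) :
    (∀ m, 1 ≤ m → m < r →
        MvPowerSeries.coeff (R := ℚ) (Finsupp.equivFunOnFinite.symm fun _ : Fin r => 1)
          (((-1 : ℚ) ^ m / (24 * m)) •
            ∑ I ∈ Finset.univ.filter (fun I : Fin m → Finset (Fin r) => IsOSP I),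
              ∏ s, blockFactor (I s)) = 0) ∧
    (Finset.univ.filter (fun I : Fin r → Finset (Fin r) => IsOSP I)).card = r.factorial ∧
    MvPowerSeries.coeff (R := ℚ) (Finsupp.equivFunOnFinite.symm fun _ : Fin r => 1)
      (((-1 : ℚ) ^ r / (24 * r)) •
        ∑ I ∈ Finset.univ.filter (fun I : Fin r → Finset (Fin r) => IsOSP I),
          ∏ s, blockFactor (I s)) = (r - 1).factorial / 24 := by

  refine ⟨?_, osp_card, ?_⟩
  · intro m h1 hm
    rw [map_smul, map_sum]
    rw [Finset.sum_eq_zero fun I hI => vanish (Finset.mem_filter.mp hI).2 hm]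
    simp
  · have hterm : ∀ I ∈ Finset.univ.filter (fun I : Fin r → Finset (Fin r) => IsOSP I),
        MvPowerSeries.coeff (Finsupp.equivFunOnFinite.symm fun _ : Fin r => 1)
          (∏ s, blockFactor (I s)) = (-1 : ℚ) ^ r := by
      intro I hI
      obtain ⟨σ, rfl⟩ := osp_full_structure (Finset.mem_filter.mp hI).2
      exact coeff_singletons σ
    rw [map_smul, map_sum, Finset.sum_congr rfl hterm, Finset.sum_const, osp_card]
    have hr0 : (r : ℚ) ≠ 0 := Nat.cast_ne_zero.mpr (by omega)
    have h1 : ((-1 : ℚ) ^ r) * (-1) ^ r = 1 := by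
      rw [← pow_add]
      exact Even.neg_one_pow ⟨r, rfl⟩
    have h2 : (r.factorial : ℚ) = r * (r - 1).factorial := by
      rw [← Nat.mul_factorial_pred (by omega : r ≠ 0)]
      push_cast
      ring
    rw [nsmul_eq_mul, smul_eq_mul]
    calc ((-1 : ℚ) ^ r / (24 * ↑r)) * (↑r.factorial * (-1) ^ r)
        = ((-1 : ℚ) ^ r * (-1) ^ r) * ↑r.factorial / (24 * ↑r) := by ring
      _ = (↑r.factorial : ℚ) / (24 * ↑r) := by rw [h1, one_mul]
      _ = ((↑r : ℚ) * ↑(r - 1).factorial) / (↑r * 24) := by rw [h2, mul_comm (24 : ℚ) (↑r : ℚ)]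
      _ = (↑(r - 1).factorial : ℚ) / 24 := mul_div_mul_left _ _ hr0
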